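/- Under Notation (*): Ass(J(H)^s) = Ass(J(H̃)^s) ∪ A, where every prime p ∈ A contains the variable y, and H̃ = H_X is the induced subhypergraph of H on X. -/

import Mathlib

open MvPolynomial

noncomputable section

/-- A finite simple hypergraph on a vertex set `V`: edges are nonempty subsets of `V`
forming an antichain (a clutter). -/
structure FinHypergraph (σ : Type*) where
  V : Finset σ
  E : Finset (Finset σ)
  edge_sub : ∀ e ∈ E, e ⊆ V
  edge_nonempty : ∀ e ∈ E, e.Nonempty
  simple : ∀ e ∈ E, ∀ f ∈ E, e ⊆ f → e = f

/-- The prime ideal generated by the variables indexed by `e`. -/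
def primeOf {σ : Type*} (K : Type*) [Field K] (e : Finset σ) : Ideal (MvPolynomial σ K) :=
  Ideal.span ((fun i => (X i : MvPolynomial σ K)) '' e)

/-- The cover ideal of a set of edges: the intersection of the edge primes. -/
def coverIdeal {σ : Type*} (K : Type*) [Field K] (E : Finset (Finset σ)) :
    Ideal (MvPolynomial σ K) :=
  ⨅ e ∈ E, primeOf K e

/-- The squarefree monomial supported on `T`. -/
def xU {σ : Type*} (K : Type*) [Field K] (T : Finset σ) : MvPolynomial σ K :=
  ∏ i ∈ T, X i
/-- `T` is a vertex cover of the edge set `E`. -/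
def IsCover {σ : Type*} (E : Finset (Finset σ)) (T : Finset σ) : Prop :=
  ∀ e ∈ E, ∃ v ∈ e, v ∈ T

/-- `T` is a minimal vertex cover of the edge set `E`. -/
def IsMinimalCover {σ : Type*} (E : Finset (Finset σ)) (T : Finset σ) : Prop :=
  IsCover E T ∧ ∀ T' ⊂ T, ¬ IsCover E T'

/-- `m` is a minimal monomial generator of the monomial ideal `I`: it lies in `I`, and
every divisor of `m` lying in `I` is associated to `m`. -/
def IsMinMonGen {σ K : Type*} [Field K] (I : Ideal (MvPolynomial σ K))
    (m : MvPolynomial σ K) : Prop :=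
  m ∈ I ∧ ∀ d : MvPolynomial σ K, d ∣ m → d ∈ I → Associated d m

/-- `(V', E')` is a shadow of the hypergraph `H`. -/
def IsShadow {σ : Type*} [DecidableEq σ] (H : FinHypergraph σ) (V' : Finset σ) (E' : Finset (Finset σ)) : Prop :=
  V' ⊆ H.V ∧ (∀ e ∈ E', e ⊆ V') ∧ (∀ e ∈ E', e.Nonempty) ∧
    (∀ e ∈ E', ∀ f ∈ E', e ⊆ f → e = f) ∧
    E'.card = H.E.card ∧ ∀ e ∈ H.E, e ∩ V' ∈ E'

/-- The cover ideal of a hypergraph on vertex set `V'` (edges `E'`, subsets of `V'`),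
as an ideal of the small polynomial ring `K[V']`. -/
def smallCover {σ : Type*} [DecidableEq σ] (K : Type*) [Field K] (V' : Finset σ)
    (E' : Finset (Finset σ)) : Ideal (MvPolynomial {x : σ // x ∈ V'} K) :=
  ⨅ e ∈ E', primeOf K (e.subtype (· ∈ V'))

/-- `(V', E')` is an odd cycle graph `C_{2n+1}` for some positive `n`. -/
def IsOddCycle {σ : Type*} [DecidableEq σ] (V' : Finset σ) (E' : Finset (Finset σ)) : Prop :=
  ∃ n : ℕ, 0 < n ∧ ∃ f : Fin (2 * n + 1) → σ, Function.Injective f ∧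
    V' = Finset.univ.image f ∧ E' = Finset.univ.image (fun i => ({f i, f (i + 1)} : Finset σ))

/- Notation (*): `H = (V, E)` is a hypergraph with `V = X ∪ {y}` where `X = V \ {y}`;
`y` belongs to exactly one edge `e_y ∈ E`; `e := e_y \ {y}`;
`H' = (X, (E \ {e_y}) ∪ {e})` is the shadow of `H` on `X`, with edge set
`insert (ey.erase y) (H.E.erase ey)`; `H̃ = H_X` is the induced subhypergraph on `X`,
with edge set `H.E.filter (· ⊆ H.V.erase y)`.  Cover ideals of `H'` and `H̃` are taken as
(cone) ideals of the ambient ring `K[V] = MvPolynomial σ K`, generated by the same monomials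
as the corresponding ideals of `K[X]`. -/

/- Write `J = J(H)` and `J̃ = J(H̃)`; the edges of `H̃` are exactly the edges of `H` avoiding `y`.
Then `J ⊆ J̃` and `y J̃ ⊆ J`, so `J^s ⊆ J̃^s` and `y^s J̃^s ⊆ J^s`: after inverting `y` the two
powers agree, hence so do their associated primes not containing `y`. Moreover `J̃^s` is extended
from `K[X]`, so `y` is a nonzerodivisor modulo `J̃^s` and no associated prime of `J̃^s`
contains `y`. -/

section AssociatedPrimes

variable {R : Type*} [CommRing R]

theorem mem_associatedPrimes_quotient_iff {I p : Ideal R} :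
    p ∈ associatedPrimes R (R ⧸ I) ↔
      p.IsPrime ∧ ∃ f : R, ∀ a, a ∈ p ↔ ∃ n : ℕ, a ^ n * f ∈ I := by
  have hcolon : ∀ f a : R,
      a ∈ ((⊥ : Submodule R (R ⧸ I)).colon {Ideal.Quotient.mk I f}).radical ↔
        ∃ n : ℕ, a ^ n * f ∈ I := fun f a => by
    simp only [Ideal.mem_radical_iff, Submodule.mem_colon_singleton, Submodule.mem_bot,
      Algebra.smul_def, Ideal.Quotient.algebraMap_eq, ← map_mul, Ideal.Quotient.eq_zero_iff_mem]
  refine ⟨fun ⟨hp, x, hx⟩ => ?_, fun ⟨hp, f, hf⟩ => ⟨hp, Ideal.Quotient.mk I f, ?_⟩⟩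
  · obtain ⟨f, rfl⟩ := Ideal.Quotient.mk_surjective x
    exact ⟨hp, f, fun a => by rw [hx, hcolon]⟩
  · ext a
    rw [hf, hcolon]

variable {I J p : Ideal R} {x : R}

theorem mem_associatedPrimes_quotient_iff_of_notMem {k : ℕ} (hIJ : I ≤ J)
    (hxJ : ∀ g ∈ J, x ^ k * g ∈ I) (hx : x ∉ p) :
    p ∈ associatedPrimes R (R ⧸ I) ↔ p ∈ associatedPrimes R (R ⧸ J) := by
  simp only [mem_associatedPrimes_quotient_iff]
  have mem_of_mul_pow_mem {a : R} {m : ℕ} (hp : p.IsPrime) (h : a * x ^ m ∈ p) : a ∈ p :=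
    (hp.mem_or_mem h).resolve_right fun h' => hx (hp.mem_of_pow_mem _ h')
  refine ⟨fun ⟨hp, f, hf⟩ => ⟨hp, x ^ k * f, fun a => ⟨fun ha => ?_, fun ⟨n, hn⟩ => ?_⟩⟩,
    fun ⟨hp, f, hf⟩ => ⟨hp, x ^ k * f, fun a => ⟨fun ha => ?_, fun ⟨n, hn⟩ => ?_⟩⟩⟩
  · obtain ⟨n, hn⟩ := (hf a).mp ha
    exact ⟨n, hIJ (by simpa only [mul_left_comm] using I.mul_mem_left (x ^ k) hn)⟩
  · refine hp.mem_of_pow_mem n (mem_of_mul_pow_mem (m := k + k) hp ((hf _).mpr ⟨1, ?_⟩))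
    simpa only [pow_one, pow_add, mul_comm, mul_left_comm, mul_assoc] using hxJ _ hn
  · obtain ⟨n, hn⟩ := (hf a).mp ha
    exact ⟨n, by simpa only [mul_left_comm] using hxJ _ hn⟩
  · refine hp.mem_of_pow_mem n (mem_of_mul_pow_mem (m := k) hp ((hf _).mpr ⟨1, ?_⟩))
    simpa only [pow_one, mul_assoc] using hIJ hn

theorem notMem_of_mem_associatedPrimes_quotient (hsat : ∀ f, x * f ∈ J → f ∈ J)
    (hp : p ∈ associatedPrimes R (R ⧸ J)) : x ∉ p := by
  obtain ⟨hprime, f, hf⟩ := mem_associatedPrimes_quotient_iff.mp hp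
  intro hx
  obtain ⟨n, hn⟩ := (hf x).mp hx
  have hfJ : f ∈ J := by
    induction n with
    | zero => simpa using hn
    | succ n ih => exact ih (hsat _ (by simpa only [pow_succ', mul_assoc] using hn))
  exact hprime.ne_top ((Ideal.eq_top_iff_one p).mpr ((hf 1).mpr ⟨0, by simpa using hfJ⟩))

/-- The hypotheses say that `J = I : x^∞`. -/
theorem associatedPrimes_quotient_eq_union {k : ℕ} (hIJ : I ≤ J)
    (hxJ : ∀ g ∈ J, x ^ k * g ∈ I) (hsat : ∀ f, x * f ∈ J → f ∈ J) :
    associatedPrimes R (R ⧸ I) =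
      associatedPrimes R (R ⧸ J) ∪ {p | p ∈ associatedPrimes R (R ⧸ I) ∧ x ∈ p} := by
  ext p
  by_cases hx : x ∈ p
  · have hJ : p ∉ associatedPrimes R (R ⧸ J) :=
      fun hp => notMem_of_mem_associatedPrimes_quotient hsat hp hx
    simp [hx, hJ]
  · simp [hx, mem_associatedPrimes_quotient_iff_of_notMem hIJ hxJ hx]

theorem Ideal.pow_mul_mem_pow (hxJ : ∀ g ∈ J, x * g ∈ I) (s : ℕ) :
    ∀ g ∈ J ^ s, x ^ s * g ∈ I ^ s := by
  have hspan : Ideal.span {x} * J ≤ I := Ideal.mul_le.mpr fun r hr g hg => by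
    obtain ⟨c, rfl⟩ := Ideal.mem_span_singleton'.mp hr
    simpa only [mul_assoc] using I.mul_mem_left c (hxJ g hg)
  intro g hg
  have hxs : x ^ s ∈ Ideal.span {x} ^ s := by
    rw [Ideal.span_singleton_pow]
    exact Ideal.mem_span_singleton_self _
  have hmem : x ^ s * g ∈ (Ideal.span {x} * J) ^ s := by
    rw [mul_pow]
    exact Ideal.mul_mem_mul hxs hg
  exact Ideal.pow_right_mono hspan s hmem

end AssociatedPrimes

theorem Ideal.map_C_iInf {A : Type*} [CommRing A] {ι : Sort*} (I : ι → Ideal A) :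
    (⨅ i, I i).map (Polynomial.C : A →+* Polynomial A) = ⨅ i, (I i).map Polynomial.C := by
  ext f
  simp only [Ideal.mem_map_C_iff, Submodule.mem_iInf]
  exact forall_comm

theorem Ideal.mem_map_C_of_X_mul_mem {A : Type*} [CommRing A] {I : Ideal A} {f : Polynomial A}
    (h : Polynomial.X * f ∈ I.map Polynomial.C) : f ∈ I.map Polynomial.C := by
  rw [Ideal.mem_map_C_iff] at h ⊢
  intro n
  simpa only [Polynomial.coeff_X_mul] using h (n + 1)

theorem Ideal.comap_pow_of_equiv {R S : Type*} [CommRing R] [CommRing S] (e : R ≃+* S)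
    (I : Ideal S) (n : ℕ) : (I ^ n).comap e = I.comap e ^ n := by
  rw [← Ideal.map_symm, ← Ideal.map_symm, Ideal.map_pow]

namespace MvPolynomial

variable {σ : Type*} (K : Type*) [DecidableEq σ] [Field K]

def polynomialEquivOfNe (y : σ) : MvPolynomial σ K ≃+* Polynomial (MvPolynomial {x // x ≠ y} K) :=
  ((renameEquiv K (Equiv.optionSubtypeNe y).symm).trans (optionEquivLeft K _)).toRingEquiv

variable {K}

@[simp]
theorem polynomialEquivOfNe_X_self (y : σ) : polynomialEquivOfNe K y (X y) = Polynomial.X := by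
  simp [polynomialEquivOfNe, optionEquivLeft_X_none]

theorem polynomialEquivOfNe_X_of_ne {y i : σ} (h : i ≠ y) :
    polynomialEquivOfNe K y (X i) = Polynomial.C (X ⟨i, h⟩) := by
  simp [polynomialEquivOfNe, Equiv.optionSubtypeNe_symm_of_ne h, optionEquivLeft_X_some]

theorem map_primeOf_polynomialEquivOfNe {y : σ} {t : Finset σ} (hy : y ∉ t) :
    (primeOf K t).map (polynomialEquivOfNe K y) =
      (primeOf K (t.subtype (· ≠ y))).map Polynomial.C := by
  simp only [primeOf, Ideal.map_span, Set.image_image]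
  congr 1
  ext z
  simp only [Set.mem_image, Finset.mem_coe, Finset.mem_subtype, Subtype.exists]
  constructor
  · rintro ⟨i, hi, rfl⟩
    have hiy : i ≠ y := ne_of_mem_of_not_mem hi hy
    exact ⟨i, hiy, hi, (polynomialEquivOfNe_X_of_ne hiy).symm⟩
  · rintro ⟨i, hiy, hi, rfl⟩
    exact ⟨i, hi, polynomialEquivOfNe_X_of_ne hiy⟩

end MvPolynomial

section CoverIdeal

variable {σ K : Type*} [Field K]

theorem coverIdeal_anti {E E' : Finset (Finset σ)} (h : E' ⊆ E) :
    coverIdeal K E ≤ coverIdeal K E' :=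
  le_iInf₂ fun t ht => iInf₂_le t (h ht)

variable [DecidableEq σ]

theorem X_mul_mem_coverIdeal {E : Finset (Finset σ)} {y : σ} {g : MvPolynomial σ K}
    (hg : g ∈ coverIdeal K (E.filter (y ∉ ·))) : X y * g ∈ coverIdeal K E := by
  simp only [coverIdeal, Submodule.mem_iInf] at hg ⊢
  intro t ht
  by_cases hyt : y ∈ t
  · exact Ideal.mul_mem_right _ _ (Ideal.subset_span ⟨y, hyt, rfl⟩)
  · exact Ideal.mul_mem_left _ _ (hg t (Finset.mem_filter.mpr ⟨ht, hyt⟩))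

theorem coverIdeal_pow_eq_comap_map_C {y : σ} {S : Finset (Finset σ)} (hS : ∀ t ∈ S, y ∉ t)
    (s : ℕ) :
    coverIdeal K S ^ s = (((⨅ t ∈ S, primeOf K (t.subtype (· ≠ y))) ^ s).map
      Polynomial.C).comap (polynomialEquivOfNe K y) := by
  have hcover : coverIdeal K S = ((⨅ t ∈ S, primeOf K (t.subtype (· ≠ y))).map
      Polynomial.C).comap (polynomialEquivOfNe K y) := by
    simp only [coverIdeal, Ideal.map_C_iInf, Ideal.comap_iInf]
    refine iInf_congr fun t => iInf_congr fun ht => ?_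
    rw [← map_primeOf_polynomialEquivOfNe (hS t ht),
      Ideal.comap_map_of_bijective _ (polynomialEquivOfNe K y).bijective]
  rw [hcover, ← Ideal.comap_pow_of_equiv, ← Ideal.map_pow]

theorem mem_coverIdeal_pow_of_X_mul_mem {y : σ} {S : Finset (Finset σ)} (hS : ∀ t ∈ S, y ∉ t)
    {s : ℕ} {f : MvPolynomial σ K} (h : X y * f ∈ coverIdeal K S ^ s) :
    f ∈ coverIdeal K S ^ s := by
  rw [coverIdeal_pow_eq_comap_map_C hS, Ideal.mem_comap] at h ⊢
  rw [map_mul, polynomialEquivOfNe_X_self] at h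
  exact Ideal.mem_map_C_of_X_mul_mem h

theorem FinHypergraph.filter_subset_erase_eq (H : FinHypergraph σ) (y : σ) :
    H.E.filter (fun f => f ⊆ H.V.erase y) = H.E.filter (y ∉ ·) :=
  Finset.filter_congr fun t ht => by simp [Finset.subset_erase, H.edge_sub t ht]

end CoverIdeal

theorem ass_eq_ass_induced_union {σ K : Type*} [DecidableEq σ] [Field K]
    (H : FinHypergraph σ) (y : σ)
    (s : ℕ) :
    ∃ A : Set (Ideal (MvPolynomial σ K)),
      associatedPrimes (MvPolynomial σ K)
          (MvPolynomial σ K ⧸ (coverIdeal K H.E) ^ s) =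
        associatedPrimes (MvPolynomial σ K)
          (MvPolynomial σ K ⧸
            (coverIdeal K (H.E.filter (fun f => f ⊆ H.V.erase y))) ^ s) ∪ A ∧
      ∀ p ∈ A, (X y : MvPolynomial σ K) ∈ p := by
  rw [H.filter_subset_erase_eq y]
  refine ⟨_, associatedPrimes_quotient_eq_union
    (Ideal.pow_right_mono (coverIdeal_anti (Finset.filter_subset _ _)) s)
    (Ideal.pow_mul_mem_pow (fun _ => X_mul_mem_coverIdeal) s)
    (fun _ => mem_coverIdeal_pow_of_X_mul_mem fun _ ht => (Finset.mem_filter.mp ht).2),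
    fun _ hp => hp.2⟩
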